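/- arXiv:math/0507299 — 5 statements merged into one kernel-verified Lean document; each statement's English description precedes it below -/
import Mathlib

section
/- The operation g ∗ h = g₊ h g₋⁻¹ makes the set of invertible complex n×n matrices into a group: ∗ is associative, the identity matrix is a two-sided identity for ∗, and every element has a two-sided ∗-inverse. -/
open Matrix

noncomputable section

open Classical

/-- The Iwasawa pair `(g₊, g₋)` of an invertible complex matrix `g`: the unique
pair with `g₊` unitary, `g₋` lower triangular with positive real diagonal entries
and `g = g₊ g₋⁻¹` (junk value `(1,1)` if no such pair exists). -/
noncomputable def iwaPair {n : ℕ} (g : Matrix (Fin n) (Fin n) ℂ) :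
    Matrix (Fin n) (Fin n) ℂ × Matrix (Fin n) (Fin n) ℂ :=
  if h : ∃ p : Matrix (Fin n) (Fin n) ℂ × Matrix (Fin n) (Fin n) ℂ,
      p.1ᴴ * p.1 = 1 ∧ (∀ i j : Fin n, i < j → p.2 i j = 0) ∧
      (∀ i : Fin n, 0 < (p.2 i i).re ∧ (p.2 i i).im = 0) ∧ g = p.1 * p.2⁻¹
  then h.choose else (1, 1)

/-- The dressing dual group multiplication `g ∗ h = g₊ h g₋⁻¹`. -/
noncomputable def dstar {n : ℕ} (g h : Matrix (Fin n) (Fin n) ℂ) :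
    Matrix (Fin n) (Fin n) ℂ :=
  (iwaPair g).1 * h * ((iwaPair g).2)⁻¹

/-!
Applying the LDL decomposition to the positive definite matrix `g⁻¹ g⁻¹ᴴ` writes every invertible
`g` as `g₊ g₋⁻¹` with `g₊` unitary and `g₋` lower triangular with positive diagonal; the
factorisation is unique because a unitary lower triangular matrix with positive diagonal is `1`.
Since `Q h L⁻¹ = (Q h₊)(L h₋)⁻¹`, uniqueness gives `(g ∗ h)₊ = g₊ h₊` and `(g ∗ h)₋ = g₋ h₋`, from
which associativity follows; `1 = 1 · 1⁻¹` is the identity and `g₊⁻¹ g₋` is the `∗`-inverse of `g`.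
-/

open scoped ComplexOrder

namespace Matrix

section Triangular

variable {m : Type*} [Fintype m] [LinearOrder m]

theorem IsLowerTriangular.mul_apply_self {R : Type*} [NonUnitalNonAssocSemiring R]
    {A B : Matrix m m R} (hA : A.IsLowerTriangular) (hB : B.IsLowerTriangular) (i : m) :
    (A * B) i i = A i i * B i i := by
  rw [mul_apply, Finset.sum_eq_single i]
  · intro k _ hki
    rcases hki.lt_or_gt with hk | hk
    · rw [hB hk, mul_zero]
    · rw [hA hk, zero_mul]
  · simp

theorem IsLowerTriangular.inv {R : Type*} [CommRing R] {A : Matrix m m R}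
    (hA : A.IsLowerTriangular) : A⁻¹.IsLowerTriangular := by
  by_cases h : IsUnit A.det
  · let := invertibleOfIsUnitDet A h
    exact blockTriangular_inv_of_blockTriangular hA
  · rw [nonsing_inv_apply_not_isUnit A h]
    exact blockTriangular_zero

theorem IsLowerTriangular.inv_apply_self {K : Type*} [Field K] {A : Matrix m m K}
    (hA : A.IsLowerTriangular) (hu : IsUnit A) (i : m) : A⁻¹ i i = (A i i)⁻¹ := by
  have h := congrFun (congrFun (mul_nonsing_inv A ((isUnit_iff_isUnit_det A).mp hu)) i) i
  rw [hA.mul_apply_self hA.inv, one_apply_eq] at h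
  exact eq_inv_of_mul_eq_one_right h

end Triangular

variable {𝕜 : Type*} [RCLike 𝕜] {m : Type*} [LinearOrder m]

structure IsPosLowerTriangular (L : Matrix m m 𝕜) : Prop where
  isLowerTriangular : L.IsLowerTriangular
  diag_pos : ∀ i, 0 < L i i

namespace IsPosLowerTriangular

theorem one : (1 : Matrix m m 𝕜).IsPosLowerTriangular :=
  ⟨blockTriangular_one, fun i => by simp⟩

section

variable [Fintype m] {A B L : Matrix m m 𝕜}

theorem mul (hA : A.IsPosLowerTriangular) (hB : B.IsPosLowerTriangular) :
    (A * B).IsPosLowerTriangular :=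
  ⟨hA.isLowerTriangular.mul hB.isLowerTriangular, fun i => by
    rw [hA.isLowerTriangular.mul_apply_self hB.isLowerTriangular]
    exact mul_pos (hA.diag_pos i) (hB.diag_pos i)⟩

theorem isUnit (hL : L.IsPosLowerTriangular) : IsUnit L := by
  rw [isUnit_iff_isUnit_det, det_of_isLowerTriangular L hL.isLowerTriangular]
  exact isUnit_iff_ne_zero.mpr (Finset.prod_ne_zero_iff.mpr fun i _ => (hL.diag_pos i).ne')

theorem inv (hL : L.IsPosLowerTriangular) : L⁻¹.IsPosLowerTriangular :=
  ⟨hL.isLowerTriangular.inv, fun i => by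
    rw [hL.isLowerTriangular.inv_apply_self hL.isUnit]
    exact RCLike.inv_pos.mpr (hL.diag_pos i)⟩

/-- `L⁻¹ = Lᴴ` is lower and upper triangular, so `L` is diagonal with `L i i = (L i i)⁻¹ > 0`. -/
theorem eq_one_of_mem_unitaryGroup (hL : L.IsPosLowerTriangular) (hU : L ∈ unitaryGroup m 𝕜) :
    L = 1 := by
  have hinv : L⁻¹ = Lᴴ := inv_eq_left_inv (mem_unitaryGroup_iff'.mp hU)
  ext i j
  rcases lt_trichotomy i j with hij | rfl | hij
  · rw [hL.isLowerTriangular hij, one_apply_ne hij.ne]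
  · have hself : star (L i i) = L i i :=
      RCLike.conj_eq_iff_im.mpr (RCLike.pos_iff.mp (hL.diag_pos i)).2
    have h := hL.isLowerTriangular.inv_apply_self hL.isUnit i
    rw [hinv, conjTranspose_apply, hself] at h
    have hsq : L i i * L i i = 1 := by
      nth_rewrite 1 [h]
      exact inv_mul_cancel₀ (hL.diag_pos i).ne'
    rcases mul_self_eq_one_iff.mp hsq with h1 | h1
    · rw [h1, one_apply_eq]
    · exact absurd (h1 ▸ hL.diag_pos i) (lt_asymm (neg_lt_zero.mpr zero_lt_one))
  · have h := hL.inv.isLowerTriangular hij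
    rw [hinv, conjTranspose_apply, star_eq_zero] at h
    rw [h, one_apply_ne hij.ne']

end

end IsPosLowerTriangular

section Iwasawa

variable [Fintype m]

/-- Gram–Schmidt changes each basis vector only by multiples of the earlier ones. -/
theorem LDL.lowerInv_apply_self [LocallyFiniteOrderBot m] {S : Matrix m m 𝕜} (hS : S.PosDef)
    (i : m) : LDL.lowerInv hS i i = 1 := by
  let := Sᵀ.toNormedAddCommGroup hS.transpose
  let := Sᵀ.toInnerProductSpace hS.transpose.posSemidef
  have hz : ∀ k < i, InnerProductSpace.gramSchmidt 𝕜 (Pi.basisFun 𝕜 m) k i = 0 :=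
    fun k hk => LDL.lowerInv_triangular hS hk
  have h := congrFun (InnerProductSpace.gramSchmidt_def'' 𝕜 (Pi.basisFun 𝕜 m) i) i
  simp only [Pi.basisFun_apply, Pi.single_eq_same, Pi.add_apply, Finset.sum_apply,
    Pi.smul_apply, smul_eq_mul] at h
  rw [Finset.sum_eq_zero fun k hk => mul_eq_zero_of_right _ (hz k (Finset.mem_Iio.mp hk)),
    add_zero] at h
  exact h.symm

theorem PosDef.exists_isPosLowerTriangular_mul_mul_conjTranspose_eq_one
    [LocallyFiniteOrderBot m] {S : Matrix m m 𝕜} (hS : S.PosDef) :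
    ∃ M : Matrix m m 𝕜, M.IsPosLowerTriangular ∧ M * S * Mᴴ = 1 := by
  -- `M = D^(-1/2) N` for the LDL decomposition `N S Nᴴ = D`, `N` unit lower triangular
  have hD : (diagonal (LDL.diagEntries hS)).PosDef := by
    rw [← LDL.diag, LDL.diag_eq_lowerInv_conj]
    exact hS.mul_mul_conjTranspose_same
      (vecMul_injective_iff_isUnit.mpr (isUnit_of_invertible (LDL.lowerInv hS)))
  choose r hr hrd using fun i => RCLike.pos_iff_exists_ofReal.mp (posDef_diagonal_iff.mp hD i)
  let c : m → 𝕜 := fun i => ((√(r i))⁻¹ : ℝ)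
  have hc : star c = c := funext fun i => RCLike.conj_ofReal _
  have hcrc : c * LDL.diagEntries hS * c = 1 := funext fun i => by
    simp only [Pi.mul_apply, Pi.one_apply, c, ← hrd i]
    rw [← RCLike.ofReal_mul, ← RCLike.ofReal_mul, ← RCLike.ofReal_one]
    congr 1
    have := Real.mul_self_sqrt (hr i).le
    have := Real.sqrt_pos.mpr (hr i)
    field_simp
    linarith
  refine ⟨diagonal c * LDL.lowerInv hS, ⟨(blockTriangular_diagonal c).mul
    (fun i j hij => LDL.lowerInv_triangular hS hij), fun i => ?_⟩, ?_⟩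
  · rw [diagonal_mul, LDL.lowerInv_apply_self, mul_one]
    exact RCLike.ofReal_pos.mpr (inv_pos.mpr (Real.sqrt_pos.mpr (hr i)))
  · calc diagonal c * LDL.lowerInv hS * S * (diagonal c * LDL.lowerInv hS)ᴴ
          = diagonal c * (LDL.lowerInv hS * S * (LDL.lowerInv hS)ᴴ) * diagonal c := by
          rw [conjTranspose_mul, diagonal_conjTranspose, hc]
          simp only [Matrix.mul_assoc]
      _ = 1 := by
          rw [← LDL.diag_eq_lowerInv_conj, LDL.diag, diagonal_mul_diagonal, diagonal_mul_diagonal,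
            ← diagonal_one]
          exact congrArg diagonal hcrc

/-- `p = (g₊, g₋)` in the notation `g = g₊ g₋⁻¹`. -/
structure IsIwasawaPair (g : Matrix m m 𝕜) (p : Matrix m m 𝕜 × Matrix m m 𝕜) : Prop where
  mem_unitaryGroup : p.1 ∈ unitaryGroup m 𝕜
  isPosLowerTriangular : p.2.IsPosLowerTriangular
  eq_mul_inv : g = p.1 * p.2⁻¹

theorem isIwasawaPair_one : IsIwasawaPair (1 : Matrix m m 𝕜) (1, 1) :=
  ⟨one_mem _, .one, by simp⟩

namespace IsIwasawaPair

variable {g h Q L : Matrix m m 𝕜} {p q : Matrix m m 𝕜 × Matrix m m 𝕜}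

theorem isUnit (hp : IsIwasawaPair g p) : IsUnit g := by
  rw [hp.eq_mul_inv]
  exact (Unitary.isUnit_coe (U := ⟨_, hp.mem_unitaryGroup⟩)).mul
    (isUnit_nonsing_inv_iff.mpr hp.isPosLowerTriangular.isUnit)

/-- `q₊⁻¹ p₊ = q₋⁻¹ p₋` is both unitary and positive lower triangular. -/
theorem unique (hp : IsIwasawaPair g p) (hq : IsIwasawaPair g q) : p = q := by
  have hp₂ := (isUnit_iff_isUnit_det _).mp hp.isPosLowerTriangular.isUnit
  have hq₂ := (isUnit_iff_isUnit_det _).mp hq.isPosLowerTriangular.isUnit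
  have hkey : star q.1 * p.1 = q.2⁻¹ * p.2 := by
    rw [← nonsing_inv_mul_cancel_right p.2 p.1 hp₂, ← hp.eq_mul_inv, hq.eq_mul_inv,
      ← Matrix.mul_assoc, ← Matrix.mul_assoc, Unitary.star_mul_self_of_mem hq.mem_unitaryGroup,
      Matrix.one_mul]
  have hone : q.2⁻¹ * p.2 = 1 :=
    (hq.isPosLowerTriangular.inv.mul hp.isPosLowerTriangular).eq_one_of_mem_unitaryGroup
      (hkey ▸ mul_mem (Unitary.star_mem hq.mem_unitaryGroup) hp.mem_unitaryGroup)
  refine Prod.ext ?_ ?_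
  · rw [← Matrix.one_mul p.1, ← Unitary.mul_star_self_of_mem hq.mem_unitaryGroup,
      Matrix.mul_assoc, hkey, hone, Matrix.mul_one]
  · rw [← mul_nonsing_inv_cancel_left q.2 p.2 hq₂, hone, Matrix.mul_one]

theorem mul_mul_inv (hp : IsIwasawaPair h p) (hQ : Q ∈ unitaryGroup m 𝕜)
    (hL : L.IsPosLowerTriangular) : IsIwasawaPair (Q * h * L⁻¹) (Q * p.1, L * p.2) :=
  ⟨mul_mem hQ hp.mem_unitaryGroup, hL.mul hp.isPosLowerTriangular, by
    rw [hp.eq_mul_inv, mul_inv_rev]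
    simp only [Matrix.mul_assoc]⟩

end IsIwasawaPair

theorem isIwasawaPair_star_mul {Q L : Matrix m m 𝕜} (hQ : Q ∈ unitaryGroup m 𝕜)
    (hL : L.IsPosLowerTriangular) : IsIwasawaPair (star Q * L) (star Q, L⁻¹) :=
  ⟨Unitary.star_mem hQ, hL.inv, by
    rw [nonsing_inv_nonsing_inv _ ((isUnit_iff_isUnit_det _).mp hL.isUnit)]⟩

theorem exists_isIwasawaPair [LocallyFiniteOrderBot m] {g : Matrix m m 𝕜} (hg : IsUnit g) :
    ∃ p, IsIwasawaPair g p := by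
  have hS : (g⁻¹ * g⁻¹ᴴ).PosDef := PosDef.mul_conjTranspose_self _
    (vecMul_injective_iff_isUnit.mpr (isUnit_nonsing_inv_iff.mpr hg))
  obtain ⟨M, hM, hMS⟩ := hS.exists_isPosLowerTriangular_mul_mul_conjTranspose_eq_one
  -- `U = M g⁻¹` satisfies `U Uᴴ = M (g⁻¹ g⁻¹ᴴ) Mᴴ = 1`, and `g = Uᴴ M`
  set U := M * g⁻¹
  have hU : U * Uᴴ = 1 := by
    rw [← hMS, conjTranspose_mul]
    simp only [U, Matrix.mul_assoc]
  have hUu : Uᴴ ∈ unitaryGroup m 𝕜 := by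
    rw [mem_unitaryGroup_iff', star_eq_conjTranspose, conjTranspose_conjTranspose]
    exact hU
  refine ⟨(Uᴴ, M⁻¹), hUu, hM.inv, ?_⟩
  rw [nonsing_inv_nonsing_inv _ ((isUnit_iff_isUnit_det _).mp hM.isUnit),
    ← nonsing_inv_mul_cancel_right g M ((isUnit_iff_isUnit_det _).mp hg), ← Matrix.mul_assoc,
    mul_eq_one_comm.mp hU, Matrix.one_mul]

end Iwasawa

end Matrix

section DressingGroup

open Matrix

variable {n : ℕ}

theorem isIwasawaPair_iff {g : Matrix (Fin n) (Fin n) ℂ}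
    {p : Matrix (Fin n) (Fin n) ℂ × Matrix (Fin n) (Fin n) ℂ} :
    IsIwasawaPair g p ↔ p.1ᴴ * p.1 = 1 ∧ (∀ i j : Fin n, i < j → p.2 i j = 0) ∧
      (∀ i : Fin n, 0 < (p.2 i i).re ∧ (p.2 i i).im = 0) ∧ g = p.1 * p.2⁻¹ :=
  ⟨fun ⟨hU, hL, hg⟩ => ⟨mem_unitaryGroup_iff'.mp hU, fun _ _ hij => hL.isLowerTriangular hij,
      fun i => by simpa using RCLike.pos_iff.mp (hL.diag_pos i), hg⟩,
    fun ⟨hU, hlow, hpos, hg⟩ => ⟨mem_unitaryGroup_iff'.mpr hU,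
      ⟨fun i j hij => hlow i j hij, fun i => RCLike.pos_iff.mpr (by simpa using hpos i)⟩, hg⟩⟩

theorem isIwasawaPair_iwaPair {g : Matrix (Fin n) (Fin n) ℂ} (hg : IsUnit g) :
    IsIwasawaPair g (iwaPair g) := by
  obtain ⟨p, hp⟩ := exists_isIwasawaPair hg
  rw [iwaPair, dif_pos ⟨p, isIwasawaPair_iff.mp hp⟩]
  generalize_proofs hex
  exact isIwasawaPair_iff.mpr hex.choose_spec

theorem iwaPair_eq {g : Matrix (Fin n) (Fin n) ℂ}
    {p : Matrix (Fin n) (Fin n) ℂ × Matrix (Fin n) (Fin n) ℂ} (hp : IsIwasawaPair g p) :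
    iwaPair g = p :=
  (isIwasawaPair_iwaPair hp.isUnit).unique hp

theorem isIwasawaPair_dstar {g h : Matrix (Fin n) (Fin n) ℂ} (hg : IsUnit g) (hh : IsUnit h) :
    IsIwasawaPair (dstar g h) ((iwaPair g).1 * (iwaPair h).1, (iwaPair g).2 * (iwaPair h).2) :=
  (isIwasawaPair_iwaPair hh).mul_mul_inv (isIwasawaPair_iwaPair hg).mem_unitaryGroup
    (isIwasawaPair_iwaPair hg).isPosLowerTriangular

end DressingGroup

/-- The operation `g ∗ h = g₊ h g₋⁻¹` makes the invertible complex `n×n` matrices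
into a group: it is closed, associative, has the identity matrix as two-sided
identity, and every element has a two-sided `∗`-inverse. -/
theorem stmt_7 (n : ℕ) :
    (∀ g h : Matrix (Fin n) (Fin n) ℂ, IsUnit g → IsUnit h → IsUnit (dstar g h)) ∧
    (∀ g h k : Matrix (Fin n) (Fin n) ℂ, IsUnit g → IsUnit h → IsUnit k →
        dstar (dstar g h) k = dstar g (dstar h k)) ∧
    (∀ g : Matrix (Fin n) (Fin n) ℂ, IsUnit g → dstar g 1 = g ∧ dstar 1 g = g) ∧
    (∀ g : Matrix (Fin n) (Fin n) ℂ, IsUnit g →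
        ∃ g' : Matrix (Fin n) (Fin n) ℂ, IsUnit g' ∧ dstar g g' = 1 ∧ dstar g' g = 1) := by
  refine ⟨fun g h hg hh => (isIwasawaPair_dstar hg hh).isUnit, ?_, ?_, ?_⟩
  · intro g h k hg hh _
    rw [dstar, iwaPair_eq (isIwasawaPair_dstar hg hh)]
    simp only [dstar, Matrix.mul_inv_rev, Matrix.mul_assoc]
  · intro g hg
    constructor
    · rw [dstar, Matrix.mul_one, ← (isIwasawaPair_iwaPair hg).eq_mul_inv]
    · rw [dstar, iwaPair_eq isIwasawaPair_one]
      simp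
  · intro g hg
    obtain ⟨hQ, hL, hgQL⟩ := isIwasawaPair_iwaPair hg
    set Q := (iwaPair g).1
    set L := (iwaPair g).2
    have hL₀ := (isUnit_iff_isUnit_det L).mp hL.isUnit
    have hinv := isIwasawaPair_star_mul hQ hL
    refine ⟨star Q * L, hinv.isUnit, ?_, ?_⟩
    · rw [dstar, ← Matrix.mul_assoc, Unitary.mul_star_self_of_mem hQ, Matrix.one_mul,
        mul_nonsing_inv _ hL₀]
    · rw [dstar, iwaPair_eq hinv, nonsing_inv_nonsing_inv _ hL₀, hgQL, ← Matrix.mul_assoc,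
        Unitary.star_mul_self_of_mem hQ, Matrix.one_mul, nonsing_inv_mul _ hL₀]
end
end

section
/- Suppose g₁, g₂ : ℝ → GL(n,ℂ) are differentiable matrix-valued curves satisfying the system ġ₁ = g₁ Π_𝔨(i (g₂ g₁)^k) − Π_𝔨(i (g₁ g₂)^k) g₁ and ġ₂ = g₂ Π_𝔨(i (g₁ g₂)^k) − Π_𝔨(i (g₂ g₁)^k) g₂. Then the monodromy matrix g = g₁ g₂ satisfies the Lax equation ġ = g Π_𝔨(i g^k) − Π_𝔨(i g^k) g. -/
open Matrix

noncomputable section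

/-- The strictly upper triangular part `X₊` of a complex matrix. -/
def strictUpper {n : ℕ} (X : Matrix (Fin n) (Fin n) ℂ) : Matrix (Fin n) (Fin n) ℂ :=
  Matrix.of fun i j => if i < j then X i j else 0

/-- The projection `Π_𝔨 X = X₊ − (X₊)*` onto skew-Hermitian matrices. -/
def Pik {n : ℕ} (X : Matrix (Fin n) (Fin n) ℂ) : Matrix (Fin n) (Fin n) ℂ :=
  strictUpper X - (strictUpper X)ᴴ

/-! The Leibniz rule turns `(g₁g₂)˙` into `ġ₁g₂ + g₁ġ₂`, and for the given flows this sum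
telescopes: the two terms `∓ g₁ Π_𝔨(i (g₂g₁)^k) g₂` cancel, leaving the Lax form. -/

theorem Matrix.hasDerivAt_mul_apply {𝕜 R l m p : Type*} [NontriviallyNormedField 𝕜]
    [NormedCommRing R] [NormedAlgebra 𝕜 R] [Fintype m]
    {A : 𝕜 → Matrix l m R} {B : 𝕜 → Matrix m p R} {A' : Matrix l m R} {B' : Matrix m p R}
    {t : 𝕜} (hA : ∀ i j, HasDerivAt (fun s => A s i j) (A' i j) t)
    (hB : ∀ i j, HasDerivAt (fun s => B s i j) (B' i j) t) (i : l) (j : p) :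
    HasDerivAt (fun s => (A s * B s) i j) ((A' * B t + A t * B') i j) t := by
  simp only [mul_apply, add_apply, ← Finset.sum_add_distrib]
  exact HasDerivAt.fun_sum fun r _ => (hA i r).mul (hB r j)

theorem sub_mul_add_mul_sub_eq {R : Type*} [Ring R] (a b x y : R) :
    (a * x - y * a) * b + a * (b * y - x * b) = a * b * y - y * (a * b) := by
  noncomm_ring

theorem stmt_9_general (n k : ℕ) (g1 g2 : ℝ → Matrix (Fin n) (Fin n) ℂ)
    (h1 : ∀ (t : ℝ) (i j : Fin n), HasDerivAt (fun s => g1 s i j)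
        ((g1 t * Pik (Complex.I • (g2 t * g1 t) ^ k)
          - Pik (Complex.I • (g1 t * g2 t) ^ k) * g1 t) i j) t)
    (h2 : ∀ (t : ℝ) (i j : Fin n), HasDerivAt (fun s => g2 s i j)
        ((g2 t * Pik (Complex.I • (g1 t * g2 t) ^ k)
          - Pik (Complex.I • (g2 t * g1 t) ^ k) * g2 t) i j) t) :
    ∀ (t : ℝ) (i j : Fin n), HasDerivAt (fun s => (g1 s * g2 s) i j)
        ((g1 t * g2 t * Pik (Complex.I • (g1 t * g2 t) ^ k)
          - Pik (Complex.I • (g1 t * g2 t) ^ k) * (g1 t * g2 t)) i j) t := by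
  intro t i j
  rw [← sub_mul_add_mul_sub_eq]
  exact hasDerivAt_mul_apply (h1 t) (h2 t) i j

/-- If differentiable curves `g₁, g₂` of invertible matrices satisfy
`ġ₁ = g₁ Π_𝔨(i (g₂g₁)^k) − Π_𝔨(i (g₁g₂)^k) g₁` and
`ġ₂ = g₂ Π_𝔨(i (g₁g₂)^k) − Π_𝔨(i (g₂g₁)^k) g₂`, then the monodromy matrix
`g = g₁ g₂` satisfies the Lax equation `ġ = g Π_𝔨(i g^k) − Π_𝔨(i g^k) g`. -/
theorem stmt_9 (n k : ℕ) (hk : 0 < k) (g1 g2 : ℝ → Matrix (Fin n) (Fin n) ℂ)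
    (hinv1 : ∀ t : ℝ, IsUnit (g1 t)) (hinv2 : ∀ t : ℝ, IsUnit (g2 t))
    (h1 : ∀ (t : ℝ) (i j : Fin n), HasDerivAt (fun s => g1 s i j)
        ((g1 t * Pik (Complex.I • (g2 t * g1 t) ^ k)
          - Pik (Complex.I • (g1 t * g2 t) ^ k) * g1 t) i j) t)
    (h2 : ∀ (t : ℝ) (i j : Fin n), HasDerivAt (fun s => g2 s i j)
        ((g2 t * Pik (Complex.I • (g1 t * g2 t) ^ k)
          - Pik (Complex.I • (g2 t * g1 t) ^ k) * g2 t) i j) t) :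
    ∀ (t : ℝ) (i j : Fin n), HasDerivAt (fun s => (g1 s * g2 s) i j)
        ((g1 t * g2 t * Pik (Complex.I • (g1 t * g2 t) ^ k)
          - Pik (Complex.I • (g1 t * g2 t) ^ k) * (g1 t * g2 t)) i j) t :=
  stmt_9_general n k g1 g2 h1 h2
end
end

section
/- For any invertible complex n×n matrix g and any invertible complex n×n matrix x, one has the identity g₊⁻¹ x (x⁻¹ g x)₊ = g₋⁻¹ x (x⁻¹ g x)₋, where h₊ and h₋ denote the Iwasawa factors of h. In particular, if x is unitary then every element g₊⁻¹ x (x⁻¹ g x)₊ of the dressing orbit through x is unitary. -/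
open Matrix

/-- For invertible `g` and `x`, with `g = g₊ g₋⁻¹` and
`x⁻¹ g x = y₊ y₋⁻¹` the Iwasawa factorizations (`₊` unitary, `₋` lower triangular
with positive real diagonal), one has `g₊⁻¹ x y₊ = g₋⁻¹ x y₋`.  In particular, if
`x` is unitary, the element `g₊⁻¹ x y₊` of the dressing orbit through `x` is
unitary. -/
theorem stmt_14 (n : ℕ) (g x : Matrix (Fin n) (Fin n) ℂ)
    (hg : IsUnit g) (hx : IsUnit x)
    (gp gm yp ym : Matrix (Fin n) (Fin n) ℂ)
    (hgp : gpᴴ * gp = 1)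
    (hgm1 : ∀ i j : Fin n, i < j → gm i j = 0)
    (hgm2 : ∀ i : Fin n, 0 < (gm i i).re ∧ (gm i i).im = 0)
    (hgfact : g = gp * gm⁻¹)
    (hyp : ypᴴ * yp = 1)
    (hym1 : ∀ i j : Fin n, i < j → ym i j = 0)
    (hym2 : ∀ i : Fin n, 0 < (ym i i).re ∧ (ym i i).im = 0)
    (hyfact : x⁻¹ * g * x = yp * ym⁻¹) :
    gp⁻¹ * x * yp = gm⁻¹ * x * ym ∧
    (xᴴ * x = 1 → (gp⁻¹ * x * yp)ᴴ * (gp⁻¹ * x * yp) = 1) := by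

  -- `gp` and `yp` are unitary, hence invertible with inverse the conjugate transpose.
  have hgp' : gp * gpᴴ = 1 := mul_eq_one_comm.mp hgp
  have hyp' : yp * ypᴴ = 1 := mul_eq_one_comm.mp hyp
  have hgpinv : gp⁻¹ = gpᴴ := Matrix.inv_eq_right_inv hgp'
  have hypinv : yp⁻¹ = ypᴴ := Matrix.inv_eq_right_inv hyp'
  have hgpu : IsUnit gp := ⟨⟨gp, gpᴴ, hgp', hgp⟩, rfl⟩
  have hypu : IsUnit yp := ⟨⟨yp, ypᴴ, hyp', hyp⟩, rfl⟩
  -- `gm` and `ym` are invertible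
  have hgmiu : IsUnit gm⁻¹ := by
    have h1 : gm⁻¹ = gpᴴ * g := by
      rw [hgfact, ← Matrix.mul_assoc, hgp, Matrix.one_mul]
    have hgphu : IsUnit gpᴴ := ⟨⟨gpᴴ, gp, hgp, hgp'⟩, rfl⟩
    rw [h1]
    exact hgphu.mul hg
  have hgmu : IsUnit gm := Matrix.isUnit_nonsing_inv_iff.mp hgmiu
  have hxinvu : IsUnit x⁻¹ := Matrix.isUnit_nonsing_inv_iff.mpr hx
  have hymiu : IsUnit ym⁻¹ := by
    have h1 : ym⁻¹ = ypᴴ * (x⁻¹ * g * x) := by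
      rw [hyfact, ← Matrix.mul_assoc, hyp, Matrix.one_mul]
    have hyphu : IsUnit ypᴴ := ⟨⟨ypᴴ, yp, hyp, hyp'⟩, rfl⟩
    rw [h1]
    exact hyphu.mul ((hxinvu.mul hg).mul hx)
  have hymu : IsUnit ym := Matrix.isUnit_nonsing_inv_iff.mp hymiu
  -- key computation : gp * gm⁻¹ * x * ym = x * yp
  have hxx : x * x⁻¹ = 1 := Matrix.mul_nonsing_inv x ((Matrix.isUnit_iff_isUnit_det x).mp hx)
  have hymym : ym⁻¹ * ym = 1 := Matrix.nonsing_inv_mul ym ((Matrix.isUnit_iff_isUnit_det ym).mp hymu)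
  have hkey : gp * (gm⁻¹ * x * ym) = x * yp := by
    have h2 : g * x = x * (yp * ym⁻¹) := by
      calc g * x = x * (x⁻¹ * g * x) := by
            rw [← Matrix.mul_assoc, ← Matrix.mul_assoc, hxx, Matrix.one_mul]
        _ = x * (yp * ym⁻¹) := by rw [hyfact]
    calc gp * (gm⁻¹ * x * ym) = g * x * ym := by
          rw [hgfact]; noncomm_ring
      _ = x * (yp * ym⁻¹) * ym := by rw [h2]
      _ = x * yp := by rw [Matrix.mul_assoc, Matrix.mul_assoc, hymym, Matrix.mul_one]
  have hmain : gp⁻¹ * x * yp = gm⁻¹ * x * ym := by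
    calc gp⁻¹ * x * yp = gp⁻¹ * (x * yp) := by rw [Matrix.mul_assoc]
      _ = gp⁻¹ * (gp * (gm⁻¹ * x * ym)) := by rw [hkey]
      _ = gm⁻¹ * x * ym := by
          rw [← Matrix.mul_assoc, hgpinv, hgp, Matrix.one_mul]
  refine ⟨hmain, fun hxu => ?_⟩
  -- unitarity
  have : (gp⁻¹ * x * yp)ᴴ * (gp⁻¹ * x * yp)
      = ypᴴ * (xᴴ * ((gp⁻¹)ᴴ * gp⁻¹ * x * yp)) := by
    simp only [Matrix.conjTranspose_mul]
    noncomm_ring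
  rw [this, hgpinv, Matrix.conjTranspose_conjTranspose, hgp', Matrix.one_mul,
    ← Matrix.mul_assoc xᴴ x yp, hxu, Matrix.one_mul, hyp]
end

section
/- The dressing orbit through x_f^e equals 𝒯^e: for an n×n complex matrix a, there exists an invertible complex n×n matrix g with a = g₊⁻¹ x_f^e ((x_f^e)⁻¹ g x_f^e)₊ if and only if a belongs to 𝒯^e, the set of block diagonal matrices whose 2×2 diagonal blocks are of the form [[conj(α), ρ],[ρ, −α]] with α in the open unit disk and ρ = (1 − |α|²)^{1/2} (with final 1×1 block equal to −1 when n is odd). -/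
open Matrix

noncomputable section

/-- `ρ = (1 − |α|²)^{1/2}`, as a complex number. -/
def rhoC (a : ℂ) : ℂ := ((Real.sqrt (1 - ‖a‖ ^ 2) : ℝ) : ℂ)

/-- The even θ-factor `g^e = diag(θ(α₀), θ(α₂), …)`: block diagonal with `2×2`
blocks `θ(α_{2m}) = [[conj α, ρ],[ρ, −α]]` on rows/columns `{2m, 2m+1}`, and final
`1×1` block `−1` when `n` is odd. -/
def cmvE (n : ℕ) (α : ℕ → ℂ) : Matrix (Fin n) (Fin n) ℂ :=
  Matrix.of fun i j =>
    if i.val % 2 = 0 then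
      if j.val = i.val then (if i.val + 1 < n then (starRingEnd ℂ) (α i.val) else -1)
      else if j.val = i.val + 1 then rhoC (α i.val)
      else 0
    else
      if j.val = i.val - 1 then rhoC (α (i.val - 1))
      else if j.val = i.val then -α (i.val - 1)
      else 0

/-- The odd θ-factor `g^o = diag(1, θ(α₁), θ(α₃), …)`: the `1×1` block `1` followed
by `2×2` blocks `θ(α_{2m+1})` on rows/columns `{2m+1, 2m+2}`, and final `1×1` block
`−1` when `n` is even. -/
def cmvO (n : ℕ) (α : ℕ → ℂ) : Matrix (Fin n) (Fin n) ℂ :=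
  Matrix.of fun i j =>
    if i.val = 0 then (if j.val = 0 then 1 else 0)
    else if i.val % 2 = 1 then
      if j.val = i.val then (if i.val + 1 < n then (starRingEnd ℂ) (α i.val) else -1)
      else if j.val = i.val + 1 then rhoC (α i.val)
      else 0
    else
      if j.val = i.val - 1 then rhoC (α (i.val - 1))
      else if j.val = i.val then -α (i.val - 1)
      else 0

/-- Extend an `(n−1)`-tuple of Verblunsky coefficients to a function on `ℕ`
(by `0` outside the range; these values are never used). -/
def extTuple (n : ℕ) (α : Fin (n - 1) → ℂ) : ℕ → ℂ :=
  fun j => if h : j < n - 1 then α ⟨j, h⟩ else 0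

/-- The CMV matrix `g(α) = g^e g^o` associated to `α = (α₀,…,α_{n−2})`. -/
def cmv (n : ℕ) (α : Fin (n - 1) → ℂ) : Matrix (Fin n) (Fin n) ℂ :=
  cmvE n (extTuple n α) * cmvO n (extTuple n α)

open Classical

/-- The special matrix `x_f^e = diag(w*, w*, …)` (with final `1×1` block `−1` when
`n` is odd), i.e. the even θ-factor with all Verblunsky parameters `0`. -/
noncomputable def xfe (n : ℕ) : Matrix (Fin n) (Fin n) ℂ := cmvE n fun _ => 0

/-- `𝒯^e`: the set of block diagonal matrices with `2×2` diagonal blocks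
`[[conj α, ρ],[ρ, −α]]`, `α` in the open unit disk (final `1×1` block `−1` when
`n` is odd). -/
def Te (n : ℕ) : Set (Matrix (Fin n) (Fin n) ℂ) :=
  {a | ∃ α : ℕ → ℂ, (∀ j, ‖α j‖ < 1) ∧ a = cmvE n α}

/-!
Write `x = x_f^e`, an involution, and `g = u₁ l₁⁻¹`, `x g x = u₂ l₂⁻¹` (Iwasawa). Then
`a = u₁⁻¹ x u₂` is unitary and also equals `l₁⁻¹ x l₂`, a product "lower triangular · x · lower
triangular"; the same holds for `a⁻¹ = aᴴ = l₂⁻¹ x l₁`. Since `x` only swaps the indices `2m` and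
`2m + 1`, this forces `a` to be block diagonal along the pairs `{2m, 2m + 1}`, with positive
off-diagonal entries in each `2×2` block and a negative final `1×1` entry. A unitary `2×2` block
with positive off-diagonal entries is `[[ᾱ, ρ], [ρ, -α]]`, and a negative unit scalar is `-1`.

Conversely, `L(α) g^e(α) = x L(ᾱ)` for the lower triangular `L(α)` with blocks `[[1, 0], [α, ρ]]`,
so `g = L(α)⁻¹` has `g₊ = 1` and `(x g x)₊ = x g^e(α)`, whence the orbit point is `g^e(α)`.
The Iwasawa factorisation itself comes from the `LDLᴴ` factorisation of `(gᴴ g)⁻¹`.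
-/

open scoped ComplexOrder

lemma Complex.eq_one_of_pos_of_mul_self {z : ℂ} (hz : 0 < z) (h : z * z = 1) : z = 1 :=
  (mul_self_eq_one_iff.1 h).resolve_right fun h1 => absurd (h1 ▸ hz) (by norm_num)

lemma Complex.eq_neg_one_of_neg_of_mul_star {z : ℂ} (hz : z < 0) (h : z * star z = 1) :
    z = -1 := by
  have hz' : 0 < -z := neg_pos.2 hz
  have hstar : star z = z := by
    rw [← neg_neg z, star_neg, (IsSelfAdjoint.of_nonneg hz'.le).star_eq]
  rw [← neg_neg z, Complex.eq_one_of_pos_of_mul_self hz' (by rw [neg_mul_neg, ← h, hstar])]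

section LowerPos

variable {m : Type*} [LinearOrder m]

def IsLowerPos (L : Matrix m m ℂ) : Prop :=
  L.IsLowerTriangular ∧ ∀ i, 0 < L i i

lemma isLowerPos_iff {L : Matrix m m ℂ} : IsLowerPos L ↔
    (∀ i j, i < j → L i j = 0) ∧ ∀ i, 0 < (L i i).re ∧ (L i i).im = 0 := by
  simp only [IsLowerPos, Complex.pos_iff, eq_comm (a := (0 : ℝ))]
  rfl

variable [Fintype m]

lemma Matrix.IsLowerTriangular.mul_apply_self_s15 {A B : Matrix m m ℂ} (hA : A.IsLowerTriangular)
    (hB : B.IsLowerTriangular) (i : m) : (A * B) i i = A i i * B i i := by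
  rw [mul_apply, Fintype.sum_eq_single i]
  intro k hk
  rcases hk.lt_or_gt with hki | hik
  · rw [hB hki, mul_zero]
  · rw [hA hik, zero_mul]

namespace IsLowerPos

variable {L M : Matrix m m ℂ}

lemma mul (hL : IsLowerPos L) (hM : IsLowerPos M) : IsLowerPos (L * M) :=
  ⟨hL.1.mul hM.1, fun i => by rw [hL.1.mul_apply_self_s15 hM.1]; exact mul_pos (hL.2 i) (hM.2 i)⟩

variable [DecidableEq m]

lemma isUnit (hL : IsLowerPos L) : IsUnit L := by
  rw [isUnit_iff_isUnit_det, det_of_isLowerTriangular L hL.1]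
  exact (Finset.prod_ne_zero_iff.2 fun i _ => (hL.2 i).ne').isUnit

lemma isLowerTriangular_inv (hL : IsLowerPos L) : L⁻¹.IsLowerTriangular :=
  have := hL.isUnit.invertible
  blockTriangular_inv_of_blockTriangular hL.1

lemma inv_apply_self (hL : IsLowerPos L) (i : m) : L⁻¹ i i = (L i i)⁻¹ := by
  have h := congr_fun₂ (mul_nonsing_inv L ((isUnit_iff_isUnit_det L).1 hL.isUnit)) i i
  rw [hL.1.mul_apply_self_s15 hL.isLowerTriangular_inv, one_apply_eq] at h
  exact (eq_inv_of_mul_eq_one_right h)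

lemma inv (hL : IsLowerPos L) : IsLowerPos L⁻¹ :=
  ⟨hL.isLowerTriangular_inv, fun i => by rw [hL.inv_apply_self]; exact inv_pos.2 (hL.2 i)⟩

lemma eq_one_of_conjTranspose_mul_self (hL : IsLowerPos L) (hu : Lᴴ * L = 1) : L = 1 := by
  have hinv : L⁻¹ = Lᴴ := inv_eq_left_inv hu
  ext i j
  rcases lt_trichotomy i j with hij | rfl | hji
  · rw [hL.1 hij, one_apply_ne hij.ne]
  · have h := hL.inv_apply_self i
    rw [hinv, conjTranspose_apply, (IsSelfAdjoint.of_nonneg (hL.2 i).le).star_eq] at h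
    rw [one_apply_eq, Complex.eq_one_of_pos_of_mul_self (hL.2 i)
      (by nth_rw 2 [h]; exact mul_inv_cancel₀ (hL.2 i).ne')]
  · have h := hL.inv.1 hji
    rw [hinv, conjTranspose_apply, star_eq_zero] at h
    rw [h, one_apply_ne hji.ne']

end IsLowerPos
end LowerPos

section Cholesky

variable {m : Type*} [Fintype m] [LinearOrder m]

lemma Matrix.IsLowerTriangular.apply_self_ne_zero [DecidableEq m] {P : Matrix m m ℂ}
    (hP : P.IsLowerTriangular) (hPu : IsUnit P) (i : m) : P i i ≠ 0 := by
  rw [isUnit_iff_isUnit_det, det_of_isLowerTriangular P hP] at hPu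
  exact Finset.prod_ne_zero_iff.1 hPu.ne_zero i (Finset.mem_univ i)

/-- Rescaling the columns of `P` by `c i = √(d i) ‖P i i‖ / P i i` makes the diagonal positive
without changing `P D Pᴴ`. -/
lemma Matrix.IsLowerTriangular.exists_isLowerPos_mul_conjTranspose_eq [DecidableEq m]
    {P : Matrix m m ℂ} (hP : P.IsLowerTriangular) (hPu : IsUnit P) {d : m → ℂ} (hd : ∀ i, 0 < d i) :
    ∃ l, IsLowerPos l ∧ l * lᴴ = P * diagonal d * Pᴴ := by
  set c : m → ℂ := fun i => ((√(d i).re * ‖P i i‖ : ℝ) : ℂ) / P i i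
  have hPi := hP.apply_self_ne_zero hPu
  have hc : ∀ i, c i * star (c i) = d i := fun i => by
    have hnorm : (‖P i i‖ : ℂ) ^ 2 = P i i * (starRingEnd ℂ) (P i i) := by
      rw [Complex.mul_conj, Complex.normSq_eq_norm_sq]; push_cast; ring
    have hsqrt : ((√(d i).re : ℝ) : ℂ) ^ 2 = d i := by
      rw [← Complex.ofReal_pow, Real.sq_sqrt (Complex.pos_iff.1 (hd i)).1.le]
      exact (Complex.eq_re_of_ofReal_le (hd i).le).symm
    simp only [c, star_div₀, Complex.star_def, Complex.conj_ofReal]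
    field_simp [hPi i, (map_ne_zero _).2 (hPi i)]
    push_cast
    rw [mul_pow, hsqrt, hnorm]
    ring
  refine ⟨P * diagonal c, ⟨hP.mul (blockTriangular_diagonal c), fun i => ?_⟩, ?_⟩
  · rw [mul_diagonal, mul_div_cancel₀ _ (hPi i)]
    exact Complex.zero_lt_real.2 (mul_pos (Real.sqrt_pos.2 (Complex.pos_iff.1 (hd i)).1)
      (norm_pos_iff.2 (hPi i)))
  · rw [conjTranspose_mul, diagonal_conjTranspose, Matrix.mul_assoc,
      ← Matrix.mul_assoc (diagonal c), diagonal_mul_diagonal, ← Matrix.mul_assoc]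
    congr 3
    exact funext hc

lemma Matrix.PosDef.exists_isLowerPos_mul_conjTranspose_eq [LocallyFiniteOrderBot m]
    {T : Matrix m m ℂ} (hT : T.PosDef) : ∃ l, IsLowerPos l ∧ l * lᴴ = T := by
  have hlower : (LDL.lower hT).IsLowerTriangular :=
    blockTriangular_inv_of_blockTriangular fun _ _ h => LDL.lowerInv_triangular hT h
  have hdiag : (LDL.diag hT).PosDef := by
    rw [LDL.diag_eq_lowerInv_conj]
    exact hT.mul_mul_conjTranspose_same (vecMul_injective_of_isUnit (isUnit_of_invertible _))
  obtain ⟨l, hl, hll⟩ := hlower.exists_isLowerPos_mul_conjTranspose_eq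
    (isUnit_nonsing_inv_iff.2 (isUnit_of_invertible _)) (posDef_diagonal_iff.1 hdiag)
  exact ⟨l, hl, hll.trans (LDL.lower_conj_diag hT)⟩

end Cholesky

section Iwasawa

variable {m : Type*} [Fintype m] [LinearOrder m] [DecidableEq m]

lemma exists_eq_mul_inv_isLowerPos [LocallyFiniteOrderBot m] {g : Matrix m m ℂ} (hg : IsUnit g) :
    ∃ u l, uᴴ * u = 1 ∧ IsLowerPos l ∧ g = u * l⁻¹ := by
  have hgg : (gᴴ * g).PosDef := PosDef.conjTranspose_mul_self g (mulVec_injective_of_isUnit hg)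
  obtain ⟨l, hl, hll⟩ := hgg.inv.exists_isLowerPos_mul_conjTranspose_eq
  have hdet : IsUnit l.det := (isUnit_iff_isUnit_det l).1 hl.isUnit
  have hdetH : IsUnit lᴴ.det := by rwa [det_conjTranspose, isUnit_star]
  refine ⟨g * l, l, ?_, hl, by rw [mul_nonsing_inv_cancel_right _ _ hdet]⟩
  have hgg' : gᴴ * g = lᴴ⁻¹ * l⁻¹ := by
    rw [← Matrix.mul_inv_rev, hll,
      nonsing_inv_nonsing_inv _ ((isUnit_iff_isUnit_det _).1 hgg.isUnit)]
  calc (g * l)ᴴ * (g * l) = lᴴ * (gᴴ * g) * l := by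
        simp only [conjTranspose_mul, Matrix.mul_assoc]
    _ = 1 := by
        rw [hgg', mul_nonsing_inv_cancel_left _ _ hdetH, nonsing_inv_mul _ hdet]

lemma eq_of_mul_inv_eq_mul_inv {u₁ u₂ l₁ l₂ : Matrix m m ℂ} (hu₁ : u₁ᴴ * u₁ = 1)
    (hu₂ : u₂ᴴ * u₂ = 1) (hl₁ : IsLowerPos l₁) (hl₂ : IsLowerPos l₂)
    (h : u₁ * l₁⁻¹ = u₂ * l₂⁻¹) : u₁ = u₂ ∧ l₁ = l₂ := by
  have hdet₁ : IsUnit l₁.det := (isUnit_iff_isUnit_det _).1 hl₁.isUnit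
  have hdet₂ : IsUnit l₂.det := (isUnit_iff_isUnit_det _).1 hl₂.isUnit
  have hu₂w : u₂ = u₁ * (l₁⁻¹ * l₂) := by
    rw [← Matrix.mul_assoc, h, nonsing_inv_mul_cancel_right _ _ hdet₂]
  have hw : l₁⁻¹ * l₂ = 1 := by
    refine (hl₁.inv.mul hl₂).eq_one_of_conjTranspose_mul_self ?_
    calc (l₁⁻¹ * l₂)ᴴ * (l₁⁻¹ * l₂) = (l₁⁻¹ * l₂)ᴴ * (u₁ᴴ * u₁) * (l₁⁻¹ * l₂) := by
          rw [hu₁, Matrix.mul_one]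
      _ = u₂ᴴ * u₂ := by simp only [hu₂w, conjTranspose_mul, Matrix.mul_assoc]
      _ = 1 := hu₂
  have hl : l₁ = l₂ := by
    rw [← Matrix.mul_one l₁, ← hw, mul_nonsing_inv_cancel_left _ _ hdet₁]
  exact ⟨by rw [hu₂w, hw, Matrix.mul_one], hl⟩

end Iwasawa

section IwaPair

variable {n : ℕ}

lemma iwaPair_eq_s15 {g u l : Matrix (Fin n) (Fin n) ℂ} (hu : uᴴ * u = 1) (hl : IsLowerPos l)
    (hg : g = u * l⁻¹) : iwaPair g = (u, l) := by
  have hex : ∃ p : Matrix (Fin n) (Fin n) ℂ × Matrix (Fin n) (Fin n) ℂ,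
      p.1ᴴ * p.1 = 1 ∧ (∀ i j : Fin n, i < j → p.2 i j = 0) ∧
      (∀ i : Fin n, 0 < (p.2 i i).re ∧ (p.2 i i).im = 0) ∧ g = p.1 * p.2⁻¹ :=
    ⟨(u, l), hu, (isLowerPos_iff.1 hl).1, (isLowerPos_iff.1 hl).2, hg⟩
  obtain ⟨hu', hl₁', hl₂', hg'⟩ := hex.choose_spec
  obtain ⟨h1, h2⟩ := eq_of_mul_inv_eq_mul_inv hu' hu (isLowerPos_iff.2 ⟨hl₁', hl₂'⟩) hl
    (hg'.symm.trans hg)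
  rw [iwaPair, dif_pos hex]
  exact Prod.ext h1 h2

lemma iwaPair_spec {g : Matrix (Fin n) (Fin n) ℂ} (hg : IsUnit g) :
    (iwaPair g).1ᴴ * (iwaPair g).1 = 1 ∧ IsLowerPos (iwaPair g).2 ∧
      g = (iwaPair g).1 * (iwaPair g).2⁻¹ := by
  obtain ⟨u, l, hu, hl, rfl⟩ := exists_eq_mul_inv_isLowerPos hg
  rw [iwaPair_eq_s15 hu hl rfl]
  exact ⟨hu, hl, rfl⟩

end IwaPair

section CMV

lemma star_rhoC (z : ℂ) : star (rhoC z) = rhoC z := by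
  rw [rhoC, Complex.star_def, Complex.conj_ofReal]

lemma rhoC_conj (z : ℂ) : rhoC ((starRingEnd ℂ) z) = rhoC z := by
  rw [rhoC, rhoC, Complex.norm_conj]

lemma rhoC_zero : rhoC 0 = 1 := by
  simp [rhoC]

lemma rhoC_pos {z : ℂ} (hz : ‖z‖ < 1) : 0 < rhoC z :=
  Complex.zero_lt_real.2 (Real.sqrt_pos.2 (by nlinarith [norm_nonneg z]))

lemma mul_conj_add_rhoC_mul_self {z : ℂ} (hz : ‖z‖ < 1) :
    z * (starRingEnd ℂ) z + rhoC z * rhoC z = 1 := by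
  rw [Complex.mul_conj, Complex.normSq_eq_norm_sq, rhoC, ← Complex.ofReal_mul,
    Real.mul_self_sqrt (by nlinarith [norm_nonneg z])]
  push_cast
  ring

/-- A unitary `2×2` matrix `[[x, r], [s, z]]` with `r, s > 0` is `[[x, ρ], [ρ, -x̄]]`. -/
lemma eq_rhoC_of_unitary_block {x r s z : ℂ} (hr : 0 < r) (hs : 0 < s)
    (h₁ : x * star x + r * star r = 1) (h₂ : star x * x + star s * s = 1)
    (h₃ : x * star s + r * star z = 0) :
    ‖x‖ < 1 ∧ r = rhoC x ∧ s = rhoC x ∧ z = -star x := by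
  rw [(IsSelfAdjoint.of_nonneg hr.le).star_eq] at h₁
  rw [(IsSelfAdjoint.of_nonneg hs.le).star_eq] at h₂ h₃
  have hrs : r = s := by
    have : (r - s) * (r + s) = 0 := by linear_combination h₁ - h₂
    exact sub_eq_zero.1 ((mul_eq_zero.1 this).resolve_right (add_pos hr hs).ne')
  subst hrs
  have hz : z = -star x := by
    have : r * (x + star z) = 0 := by linear_combination h₃
    have := (mul_eq_zero.1 this).resolve_left hr.ne'
    rw [← star_star z, show star z = -x by linear_combination this, star_neg]
  have hr' : r = (r.re : ℂ) := Complex.eq_re_of_ofReal_le hr.le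
  have hnorm : ‖x‖ ^ 2 + r.re ^ 2 = 1 := by
    have := congrArg Complex.re h₁
    rw [Complex.star_def, Complex.mul_conj, Complex.normSq_eq_norm_sq, hr'] at this
    simpa [sq] using this
  have hre : 0 < r.re := (Complex.pos_iff.1 hr).1
  refine ⟨by nlinarith [norm_nonneg x], ?_, ?_, hz⟩ <;>
  · rw [rhoC, show 1 - ‖x‖ ^ 2 = r.re ^ 2 by linarith, Real.sqrt_sq hre.le, ← hr']

variable {n : ℕ}

lemma Fin.pair_cases (i : Fin n) :
    (i.val % 2 = 0 ∧ i.val + 1 < n) ∨ (i.val % 2 = 0 ∧ ¬ i.val + 1 < n) ∨ i.val % 2 = 1 := by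
  omega

section PairSums

variable {M : Type*} [AddCommMonoid M] {f : Fin n → M} {i : Fin n}

lemma sum_eq_of_pair_even (hi : i.val % 2 = 0) (hn : i.val + 1 < n)
    (hf : ∀ k : Fin n, k.val / 2 ≠ i.val / 2 → f k = 0) :
    ∑ k, f k = f i + f ⟨i.val + 1, hn⟩ :=
  Fintype.sum_eq_add _ _ (by simp [Fin.ext_iff]) fun k hk => hf k (by
    simp only [Ne, Fin.ext_iff] at hk; omega)

lemma sum_eq_of_pair_last (hi : i.val % 2 = 0) (hn : ¬ i.val + 1 < n)
    (hf : ∀ k : Fin n, k.val / 2 ≠ i.val / 2 → f k = 0) :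
    ∑ k, f k = f i :=
  Fintype.sum_eq_single _ fun k hk => hf k (by
    simp only [Ne, Fin.ext_iff] at hk; omega)

lemma sum_eq_of_pair_odd (hi : i.val % 2 = 1)
    (hf : ∀ k : Fin n, k.val / 2 ≠ i.val / 2 → f k = 0) :
    ∑ k, f k = f ⟨i.val - 1, by omega⟩ + f i :=
  Fintype.sum_eq_add _ _ (by simp [Fin.ext_iff]; omega) fun k hk => hf k (by
    simp only [Ne, Fin.ext_iff] at hk; omega)

end PairSums

lemma cmvE_apply_of_div_ne {α : ℕ → ℂ} {i j : Fin n} (h : i.val / 2 ≠ j.val / 2) :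
    cmvE n α i j = 0 := by
  simp only [cmvE, Matrix.of_apply]
  split_ifs <;> first | rfl | omega

lemma cmvE_apply_pair {α : ℕ → ℂ} {i : Fin n} (hi : i.val % 2 = 0) (hn : i.val + 1 < n) :
    cmvE n α i i = (starRingEnd ℂ) (α i) ∧ cmvE n α i ⟨i.val + 1, hn⟩ = rhoC (α i) ∧
      cmvE n α ⟨i.val + 1, hn⟩ i = rhoC (α i) ∧
      cmvE n α ⟨i.val + 1, hn⟩ ⟨i.val + 1, hn⟩ = -α i := by
  refine ⟨?_, ?_, ?_, ?_⟩ <;> simp only [cmvE, of_apply] <;> split_ifs <;> first | rfl | omega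

lemma cmvE_apply_last {α : ℕ → ℂ} {i : Fin n} (hi : i.val % 2 = 0) (hn : ¬ i.val + 1 < n) :
    cmvE n α i i = -1 := by
  simp [cmvE, hi, hn]

lemma cmvE_mul_conjTranspose {α : ℕ → ℂ} (hα : ∀ j, ‖α j‖ < 1) :
    cmvE n α * (cmvE n α)ᴴ = 1 := by
  ext i j
  rw [mul_apply]
  simp only [conjTranspose_apply]
  have hf : ∀ k : Fin n, k.val / 2 ≠ i.val / 2 → cmvE n α i k * star (cmvE n α j k) = 0 :=
    fun k hk => by rw [cmvE_apply_of_div_ne (Ne.symm hk), zero_mul]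
  have h₀ := mul_conj_add_rhoC_mul_self (hα i.val)
  have h₁ := mul_conj_add_rhoC_mul_self (hα (i.val - 1))
  rcases i.pair_cases with ⟨hi, hn⟩ | ⟨hi, hn⟩ | hi <;>
    [rw [sum_eq_of_pair_even hi hn hf]; rw [sum_eq_of_pair_last hi hn hf];
      rw [sum_eq_of_pair_odd hi hf]] <;>
    simp only [cmvE, of_apply, one_apply, Fin.ext_iff] <;>
    split_ifs <;>
    simp only [star_rhoC, star_neg, star_zero, Complex.star_def, Complex.conj_conj, mul_zero,
      add_zero, zero_add] <;>
    first | (exfalso; omega) | grind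

lemma xfe_apply_of_div_ne {i j : Fin n} (h : i.val / 2 ≠ j.val / 2) : xfe n i j = 0 :=
  cmvE_apply_of_div_ne h

lemma xfe_conjTranspose : (xfe n)ᴴ = xfe n := by
  ext i j
  simp only [xfe, cmvE, conjTranspose_apply, of_apply, rhoC_zero]
  split_ifs <;> first | (exfalso; omega) | simp

lemma xfe_mul_self : xfe n * xfe n = 1 := by
  have h := cmvE_mul_conjTranspose (n := n) (α := fun _ => 0) (by simp)
  rwa [← xfe, xfe_conjTranspose] at h

lemma xfe_inv : (xfe n)⁻¹ = xfe n := inv_eq_left_inv xfe_mul_self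

lemma xfe_mem_unitaryGroup : xfe n ∈ unitaryGroup (Fin n) ℂ :=
  mem_unitaryGroup_iff'.2 (by rw [star_eq_conjTranspose, xfe_conjTranspose, xfe_mul_self])

/-- The lower triangular `L(α)` with `2×2` blocks `[[1, 0], [α, ρ]]` on `{2m, 2m + 1}` (and final
`1×1` block `1` when `n` is odd). -/
def lowerE (n : ℕ) (α : ℕ → ℂ) : Matrix (Fin n) (Fin n) ℂ :=
  of fun i j =>
    if i.val % 2 = 0 then (if j.val = i.val then 1 else 0)
    else if j.val = i.val - 1 then α (i.val - 1)
    else if j.val = i.val then rhoC (α (i.val - 1))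
    else 0

lemma lowerE_isLowerPos {α : ℕ → ℂ} (hα : ∀ j, ‖α j‖ < 1) : IsLowerPos (lowerE n α) := by
  refine ⟨fun i j hij => ?_, fun i => ?_⟩
  · have : (i : ℕ) < j := hij
    simp only [lowerE, of_apply]
    split_ifs <;> first | rfl | omega
  · simp only [lowerE, of_apply, if_true]
    split_ifs
    · exact one_pos
    · omega
    · exact rhoC_pos (hα _)

lemma lowerE_apply_of_div_ne {α : ℕ → ℂ} {i j : Fin n} (h : i.val / 2 ≠ j.val / 2) :
    lowerE n α i j = 0 := by
  simp only [lowerE, of_apply]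
  split_ifs <;> first | rfl | omega

lemma lowerE_mul_cmvE {α : ℕ → ℂ} (hα : ∀ j, ‖α j‖ < 1) :
    lowerE n α * cmvE n α = xfe n * lowerE n (fun k => (starRingEnd ℂ) (α k)) := by
  ext i j
  rw [mul_apply, mul_apply]
  have hf : ∀ k : Fin n, k.val / 2 ≠ i.val / 2 → lowerE n α i k * cmvE n α k j = 0 :=
    fun k hk => by rw [lowerE_apply_of_div_ne (Ne.symm hk), zero_mul]
  have hg : ∀ k : Fin n, k.val / 2 ≠ i.val / 2 →
      xfe n i k * lowerE n (fun k => (starRingEnd ℂ) (α k)) k j = 0 :=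
    fun k hk => by rw [xfe_apply_of_div_ne (Ne.symm hk), zero_mul]
  have h₁ := mul_conj_add_rhoC_mul_self (hα (i.val - 1))
  rcases i.pair_cases with ⟨hi, hn⟩ | ⟨hi, hn⟩ | hi <;>
    [rw [sum_eq_of_pair_even hi hn hf, sum_eq_of_pair_even hi hn hg];
      rw [sum_eq_of_pair_last hi hn hf, sum_eq_of_pair_last hi hn hg];
      rw [sum_eq_of_pair_odd hi hf, sum_eq_of_pair_odd hi hg]] <;>
    simp only [xfe, cmvE, lowerE, of_apply, rhoC_zero, rhoC_conj] <;>
    split_ifs <;>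
    simp only [mul_zero, zero_mul, add_zero, zero_add, mul_one, one_mul, map_zero] <;>
    first | (exfalso; omega) | grind

end CMV

section Dressing

variable {n : ℕ}

/-- Ordered so that `M.BlockTriangular pairBlock` means block *lower* triangular for the pairs
`{2m, 2m + 1}`. -/
def pairBlock (i : Fin n) : ℕᵒᵈ := OrderDual.toDual (i.val / 2)

lemma Matrix.IsLowerTriangular.blockTriangular_pairBlock {R : Type*} [Zero R]
    {M : Matrix (Fin n) (Fin n) R} (hM : M.IsLowerTriangular) : M.BlockTriangular pairBlock :=
  fun i j hij => hM (show i < j from Fin.lt_def.2 (by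
    have : i.val / 2 < j.val / 2 := hij
    omega))

lemma xfe_blockTriangular : (xfe n).BlockTriangular pairBlock :=
  fun _ _ hij => xfe_apply_of_div_ne (ne_of_lt hij)

lemma xfe_mul_apply_of_even {i : Fin n} (hi : i.val % 2 = 0) (hn : i.val + 1 < n)
    (M : Matrix (Fin n) (Fin n) ℂ) (j : Fin n) : (xfe n * M) i j = M ⟨i.val + 1, hn⟩ j := by
  rw [mul_apply, sum_eq_of_pair_even hi hn fun k hk => by
    rw [xfe_apply_of_div_ne (Ne.symm hk), zero_mul]]
  simp [xfe, cmvE, hi, hn, rhoC_zero]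

lemma xfe_mul_apply_of_last {i : Fin n} (hi : i.val % 2 = 0) (hn : ¬ i.val + 1 < n)
    (M : Matrix (Fin n) (Fin n) ℂ) (j : Fin n) : (xfe n * M) i j = -M i j := by
  rw [mul_apply, sum_eq_of_pair_last hi hn fun k hk => by
    rw [xfe_apply_of_div_ne (Ne.symm hk), zero_mul]]
  simp [xfe, cmvE, hi, hn]

lemma Matrix.IsLowerTriangular.mul_apply_of_even {A B : Matrix (Fin n) (Fin n) ℂ}
    (hA : A.IsLowerTriangular) (hB : B.BlockTriangular pairBlock) {i j : Fin n} (hi : i.val % 2 = 0)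
    (hj : j.val / 2 = i.val / 2) : (A * B) i j = A i i * B i j := by
  rw [mul_apply, Fintype.sum_eq_single i]
  intro k hk
  rcases hk.lt_or_gt with hki | hik
  · have : k.val < i.val := hki
    rw [hB (show k.val / 2 < j.val / 2 by omega), mul_zero]
  · rw [hA hik, zero_mul]

variable {L M : Matrix (Fin n) (Fin n) ℂ}

lemma blockTriangular_inv_mul_xfe_mul (hL : IsLowerPos L) (hM : IsLowerPos M) :
    (L⁻¹ * (xfe n * M)).BlockTriangular pairBlock :=
  hL.inv.1.blockTriangular_pairBlock.mul (xfe_blockTriangular.mul hM.1.blockTriangular_pairBlock)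

lemma inv_mul_xfe_mul_apply_succ_pos (hL : IsLowerPos L) (hM : IsLowerPos M) {i : Fin n}
    (hi : i.val % 2 = 0) (hn : i.val + 1 < n) : 0 < (L⁻¹ * (xfe n * M)) i ⟨i.val + 1, hn⟩ := by
  rw [hL.inv.1.mul_apply_of_even (xfe_blockTriangular.mul hM.1.blockTriangular_pairBlock) hi
    (by simp only; omega), xfe_mul_apply_of_even hi hn]
  exact mul_pos (hL.inv.2 i) (hM.2 _)

lemma inv_mul_xfe_mul_apply_self_neg (hL : IsLowerPos L) (hM : IsLowerPos M) {i : Fin n}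
    (hi : i.val % 2 = 0) (hn : ¬ i.val + 1 < n) : (L⁻¹ * (xfe n * M)) i i < 0 := by
  rw [hL.inv.1.mul_apply_of_even (xfe_blockTriangular.mul hM.1.blockTriangular_pairBlock) hi rfl,
    xfe_mul_apply_of_last hi hn, mul_neg]
  exact neg_neg_of_pos (mul_pos (hL.inv.2 i) (hM.2 i))

lemma Matrix.ext_of_pairBlock {R : Type*} [Zero R] {A B : Matrix (Fin n) (Fin n) R}
    (hA : ∀ i j : Fin n, i.val / 2 ≠ j.val / 2 → A i j = 0)
    (hB : ∀ i j : Fin n, i.val / 2 ≠ j.val / 2 → B i j = 0)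
    (hpair : ∀ (i : Fin n) (_ : i.val % 2 = 0) (hn : i.val + 1 < n),
      A i i = B i i ∧ A i ⟨i.val + 1, hn⟩ = B i ⟨i.val + 1, hn⟩ ∧
      A ⟨i.val + 1, hn⟩ i = B ⟨i.val + 1, hn⟩ i ∧
      A ⟨i.val + 1, hn⟩ ⟨i.val + 1, hn⟩ = B ⟨i.val + 1, hn⟩ ⟨i.val + 1, hn⟩)
    (hlast : ∀ i : Fin n, i.val % 2 = 0 → ¬ i.val + 1 < n → A i i = B i i) : A = B := by
  ext i j
  by_cases hij : i.val / 2 = j.val / 2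
  swap
  · rw [hA i j hij, hB i j hij]
  obtain ⟨k, hk⟩ : ∃ k : Fin n, k.val = 2 * (i.val / 2) := ⟨⟨_, by omega⟩, rfl⟩
  have hk2 : k.val % 2 = 0 := by omega
  by_cases hn : k.val + 1 < n
  · obtain ⟨h₁, h₂, h₃, h₄⟩ := hpair k hk2 hn
    have hi : i = k ∨ i = ⟨k.val + 1, hn⟩ := by simp only [Fin.ext_iff]; omega
    have hj : j = k ∨ j = ⟨k.val + 1, hn⟩ := by simp only [Fin.ext_iff]; omega
    rcases hi with hi | hi <;> rcases hj with hj | hj <;> rw [hi, hj] <;> assumption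
  · have hi : i = k := by simp only [Fin.ext_iff]; omega
    have hj : j = k := by simp only [Fin.ext_iff]; omega
    rw [hi, hj]
    exact hlast k hk2 hn

end Dressing

section Membership

variable {n : ℕ} {a : Matrix (Fin n) (Fin n) ℂ}

lemma apply_pair_of_unitary (hblock : ∀ i j : Fin n, i.val / 2 ≠ j.val / 2 → a i j = 0)
    (ha : aᴴ * a = 1) (ha' : a * aᴴ = 1) {i : Fin n} (hi : i.val % 2 = 0) (hn : i.val + 1 < n)
    (hr : 0 < a i ⟨i.val + 1, hn⟩)
    (hs : 0 < a ⟨i.val + 1, hn⟩ i) :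
    ‖a i i‖ < 1 ∧ a i ⟨i.val + 1, hn⟩ = rhoC (a i i) ∧ a ⟨i.val + 1, hn⟩ i = rhoC (a i i) ∧
      a ⟨i.val + 1, hn⟩ ⟨i.val + 1, hn⟩ = -star (a i i) := by
  have h₁ : ∑ k, a i k * star (a i k) = 1 := by simpa [mul_apply] using congr_fun₂ ha' i i
  have h₂ : ∑ k, star (a k i) * a k i = 1 := by simpa [mul_apply] using congr_fun₂ ha i i
  have h₃ : ∑ k, a i k * star (a ⟨i.val + 1, hn⟩ k) = 0 := by
    simpa [mul_apply, one_apply, Fin.ext_iff] using congr_fun₂ ha' i ⟨i.val + 1, hn⟩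
  rw [sum_eq_of_pair_even hi hn fun k hk => by rw [hblock i k (Ne.symm hk), zero_mul]] at h₁ h₃
  rw [sum_eq_of_pair_even hi hn fun k hk => by rw [hblock k i hk, mul_zero]] at h₂
  exact eq_rhoC_of_unitary_block hr hs h₁ h₂ h₃

lemma apply_last_of_unitary (hblock : ∀ i j : Fin n, i.val / 2 ≠ j.val / 2 → a i j = 0)
    (ha' : a * aᴴ = 1) {i : Fin n} (hi : i.val % 2 = 0) (hn : ¬ i.val + 1 < n)
    (hneg : a i i < 0) : a i i = -1 := by
  have h : ∑ k, a i k * star (a i k) = 1 := by simpa [mul_apply] using congr_fun₂ ha' i i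
  rw [sum_eq_of_pair_last hi hn fun k hk => by rw [hblock i k (Ne.symm hk), zero_mul]] at h
  exact Complex.eq_neg_one_of_neg_of_mul_star hneg h

/-- The witness is `α m = conj (a m m)` for even `m` with `m + 1 < n` and `0` otherwise: the
final entry `-1` (odd `n`) must not be used, since `‖α m‖ < 1` is required for every `m`. -/
lemma mem_Te_of_unitary (hblock : ∀ i j : Fin n, i.val / 2 ≠ j.val / 2 → a i j = 0)
    (ha : aᴴ * a = 1) (ha' : a * aᴴ = 1)
    (hsup : ∀ (i : Fin n) (_ : i.val % 2 = 0) (hn : i.val + 1 < n), 0 < a i ⟨i.val + 1, hn⟩)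
    (hsub : ∀ (i : Fin n) (_ : i.val % 2 = 0) (hn : i.val + 1 < n), 0 < a ⟨i.val + 1, hn⟩ i)
    (hlast : ∀ i : Fin n, i.val % 2 = 0 → ¬ i.val + 1 < n → a i i < 0) : a ∈ Te n := by
  have hpair := fun (i : Fin n) hi hn =>
    apply_pair_of_unitary hblock ha ha' hi hn (hsup i hi hn) (hsub i hi hn)
  set α : ℕ → ℂ := fun m =>
    if h : m % 2 = 0 ∧ m + 1 < n then star (a ⟨m, by omega⟩ ⟨m, by omega⟩) else 0
  have hα : ∀ (i : Fin n), i.val % 2 = 0 → i.val + 1 < n → α i = star (a i i) :=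
    fun i hi hn => by simp [α, hi, hn]
  refine ⟨α, fun m => ?_, Matrix.ext_of_pairBlock hblock (fun i j h => cmvE_apply_of_div_ne h)
    (fun i hi hn => ?_) fun i hi hn => ?_⟩
  · by_cases h : m % 2 = 0 ∧ m + 1 < n
    · simpa [α, h] using (hpair ⟨m, by omega⟩ h.1 h.2).1
    · simp [α, h]
  · obtain ⟨-, hr, hs, hz⟩ := hpair i hi hn
    obtain ⟨c₁, c₂, c₃, c₄⟩ := cmvE_apply_pair (α := α) hi hn
    rw [c₁, c₂, c₃, c₄, hα i hi hn, hr, hs, hz, ← Complex.star_def, star_star, Complex.star_def,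
      rhoC_conj]
    exact ⟨rfl, rfl, rfl, rfl⟩
  · rw [apply_last_of_unitary hblock ha' hi hn (hlast i hi hn), cmvE_apply_last hi hn]

lemma mem_Te_of_eq_inv_mul_xfe_mul {a L₁ L₂ : Matrix (Fin n) (Fin n) ℂ} (ha : aᴴ * a = 1)
    (hL₁ : IsLowerPos L₁) (hL₂ : IsLowerPos L₂) (h : a = L₁⁻¹ * (xfe n * L₂)) : a ∈ Te n := by
  have haH : aᴴ = L₂⁻¹ * (xfe n * L₁) := by
    rw [← inv_eq_left_inv ha, h, Matrix.mul_inv_rev, Matrix.mul_inv_rev, xfe_inv,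
      nonsing_inv_nonsing_inv _ ((isUnit_iff_isUnit_det _).1 hL₁.isUnit), Matrix.mul_assoc]
  have hT := blockTriangular_inv_mul_xfe_mul hL₁ hL₂
  have hT' := blockTriangular_inv_mul_xfe_mul hL₂ hL₁
  rw [← h] at hT
  rw [← haH] at hT'
  have hblock : ∀ i j : Fin n, i.val / 2 ≠ j.val / 2 → a i j = 0 := fun i j hij => by
    rcases lt_or_gt_of_ne hij with hlt | hgt
    · exact hT hlt
    · simpa using hT' (show pairBlock i < pairBlock j from hgt)
  refine mem_Te_of_unitary hblock ha (mul_eq_one_comm.1 ha) (fun i hi hn => ?_)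
    (fun i hi hn => ?_) fun i hi hn => h ▸ inv_mul_xfe_mul_apply_self_neg hL₁ hL₂ hi hn
  · exact h ▸ inv_mul_xfe_mul_apply_succ_pos hL₁ hL₂ hi hn
  · have h' := inv_mul_xfe_mul_apply_succ_pos hL₂ hL₁ hi hn
    rwa [← haH, conjTranspose_apply, star_pos_iff] at h'

lemma inv_mul_xfe_mul_mem_Te {g u₁ l₁ u₂ l₂ : Matrix (Fin n) (Fin n) ℂ} (hg : IsUnit g)
    (hu₁ : u₁ᴴ * u₁ = 1) (hl₁ : IsLowerPos l₁) (hg₁ : g = u₁ * l₁⁻¹)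
    (hu₂ : u₂ᴴ * u₂ = 1) (hl₂ : IsLowerPos l₂) (hg₂ : xfe n * g * xfe n = u₂ * l₂⁻¹) :
    u₁⁻¹ * xfe n * u₂ ∈ Te n := by
  have hu₁g : u₁ = g * l₁ := by
    rw [hg₁, nonsing_inv_mul_cancel_right _ _ ((isUnit_iff_isUnit_det _).1 hl₁.isUnit)]
  have hu₂g : u₂ = xfe n * g * xfe n * l₂ := by
    rw [hg₂, nonsing_inv_mul_cancel_right _ _ ((isUnit_iff_isUnit_det _).1 hl₂.isUnit)]
  refine mem_Te_of_eq_inv_mul_xfe_mul ?_ hl₁ hl₂ ?_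
  · rw [inv_eq_left_inv hu₁, ← star_eq_conjTranspose, ← mem_unitaryGroup_iff']
    exact mul_mem (mul_mem (Unitary.star_mem (mem_unitaryGroup_iff'.2 hu₁)) xfe_mem_unitaryGroup)
      (mem_unitaryGroup_iff'.2 hu₂)
  · calc u₁⁻¹ * xfe n * u₂ = l₁⁻¹ * (g⁻¹ * (xfe n * xfe n) * g) * (xfe n * l₂) := by
          rw [hu₂g, hu₁g, Matrix.mul_inv_rev]; simp only [Matrix.mul_assoc]
      _ = l₁⁻¹ * (xfe n * l₂) := by
        rw [xfe_mul_self, Matrix.mul_one, nonsing_inv_mul _ ((isUnit_iff_isUnit_det _).1 hg),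
          Matrix.mul_one]

lemma dressing_mem_Te {g : Matrix (Fin n) (Fin n) ℂ} (hg : IsUnit g) :
    ((iwaPair g).1)⁻¹ * xfe n * (iwaPair ((xfe n)⁻¹ * g * xfe n)).1 ∈ Te n := by
  have hX : IsUnit (xfe n) := IsUnit.of_mul_eq_one_right _ xfe_mul_self
  rw [xfe_inv]
  obtain ⟨hu₁, hl₁, hg₁⟩ := iwaPair_spec hg
  obtain ⟨hu₂, hl₂, hg₂⟩ := iwaPair_spec ((hX.mul hg).mul hX)
  exact inv_mul_xfe_mul_mem_Te hg hu₁ hl₁ hg₁ hu₂ hl₂ hg₂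

lemma exists_dressing_eq_cmvE {α : ℕ → ℂ} (hα : ∀ j, ‖α j‖ < 1) :
    ∃ g : Matrix (Fin n) (Fin n) ℂ, IsUnit g ∧
      cmvE n α = ((iwaPair g).1)⁻¹ * xfe n * (iwaPair ((xfe n)⁻¹ * g * xfe n)).1 := by
  set L := lowerE n α
  set L' := lowerE n fun k => (starRingEnd ℂ) (α k)
  have hL : IsLowerPos L := lowerE_isLowerPos hα
  have hL' : IsLowerPos L' := lowerE_isLowerPos fun j => by rw [Complex.norm_conj]; exact hα j
  have hdet := (isUnit_iff_isUnit_det _).1 hL.isUnit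
  have hdet' := (isUnit_iff_isUnit_det _).1 hL'.isUnit
  have hkey : L * cmvE n α = xfe n * L' := lowerE_mul_cmvE hα
  have hu : (xfe n * cmvE n α)ᴴ * (xfe n * cmvE n α) = 1 := by
    rw [← star_eq_conjTranspose, ← mem_unitaryGroup_iff']
    exact mul_mem xfe_mem_unitaryGroup (mem_unitaryGroup_iff.2 (cmvE_mul_conjTranspose hα))
  have hdress : xfe n * L⁻¹ * xfe n = xfe n * cmvE n α * L'⁻¹ := by
    rw [Matrix.mul_assoc (xfe n), Matrix.mul_assoc (xfe n)]
    congr 1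
    rw [← nonsing_inv_mul_cancel_left _ (cmvE n α) hdet, hkey, ← Matrix.mul_assoc L⁻¹,
      mul_nonsing_inv_cancel_right _ _ hdet']
  refine ⟨L⁻¹, hL.inv.isUnit, ?_⟩
  rw [iwaPair_eq_s15 (u := 1) (l := L) (by simp) hL (by rw [Matrix.one_mul]), xfe_inv,
    iwaPair_eq_s15 hu hL' hdress, inv_one, Matrix.one_mul, ← Matrix.mul_assoc, xfe_mul_self,
    Matrix.one_mul]

end Membership

/-- The dressing orbit through `x_f^e` equals `𝒯^e`: a matrix `a` is of the form
`g₊⁻¹ x_f^e ((x_f^e)⁻¹ g x_f^e)₊` for some invertible `g` iff `a ∈ 𝒯^e`. -/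
theorem stmt_15 (n : ℕ) (a : Matrix (Fin n) (Fin n) ℂ) :
    (∃ g : Matrix (Fin n) (Fin n) ℂ, IsUnit g ∧
        a = ((iwaPair g).1)⁻¹ * xfe n * (iwaPair ((xfe n)⁻¹ * g * xfe n)).1) ↔
      a ∈ Te n := by
  constructor
  · rintro ⟨g, hg, rfl⟩
    exact dressing_mem_Te hg
  · rintro ⟨α, hα, rfl⟩
    exact exists_dressing_eq_cmvE hα
end
end

section
/- Suppose g^e, g^o : ℝ → GL(n,ℂ) are differentiable matrix-valued curves satisfying the system ġ^e = g^e Π_𝔨(i (g^o g^e)^k) − Π_𝔨(i (g^e g^o)^k) g^e and ġ^o = g^o Π_𝔨(i (g^e g^o)^k) − Π_𝔨(i (g^o g^e)^k) g^o. Then the product g = g^e g^o satisfies the Lax equation ġ = g Π_𝔨(i g^k) − Π_𝔨(i g^k) g. -/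
open Matrix

noncomputable section

/-!
Differentiating `g = g^e g^o` by the product rule and substituting the two equations, the
cross terms `Π_𝔨(i (g^o g^e)^k)` cancel and what remains is `g B − B g` with
`B = Π_𝔨(i (g^e g^o)^k) = Π_𝔨(i g^k)`. Only this algebraic shape of the system matters: the two
projections may be replaced by arbitrary matrices `A`, `B`.
-/

section EntrywiseDeriv

variable {𝕜 R : Type*} [NontriviallyNormedField 𝕜] [NormedRing R] [NormedAlgebra 𝕜 R]
  {l m n : Type*} [Fintype m] {f : 𝕜 → Matrix l m R} {g : 𝕜 → Matrix m n R}
  {f' : Matrix l m R} {g' : Matrix m n R} {x : 𝕜}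

theorem Matrix.hasDerivAt_mul_apply_s19
    (hf : ∀ i j, HasDerivAt (fun s => f s i j) (f' i j) x)
    (hg : ∀ i j, HasDerivAt (fun s => g s i j) (g' i j) x) (i : l) (j : n) :
    HasDerivAt (fun s => (f s * g s) i j) ((f' * g x + f x * g') i j) x := by
  simp only [mul_apply, add_apply, ← Finset.sum_add_distrib]
  exact HasDerivAt.fun_sum fun k _ => (hf i k).mul (hg k j)

theorem Matrix.hasDerivAt_mul_apply_of_twisted_lax {g₁ g₂ : 𝕜 → Matrix m m R}
    {A B : Matrix m m R}
    (h₁ : ∀ i j, HasDerivAt (fun s => g₁ s i j) ((g₁ x * A - B * g₁ x) i j) x)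
    (h₂ : ∀ i j, HasDerivAt (fun s => g₂ s i j) ((g₂ x * B - A * g₂ x) i j) x) (i j : m) :
    HasDerivAt (fun s => (g₁ s * g₂ s) i j)
      ((g₁ x * g₂ x * B - B * (g₁ x * g₂ x)) i j) x := by
  have cross_terms_cancel : g₁ x * g₂ x * B - B * (g₁ x * g₂ x) =
      (g₁ x * A - B * g₁ x) * g₂ x + g₁ x * (g₂ x * B - A * g₂ x) := by
    noncomm_ring
  rw [cross_terms_cancel]
  exact Matrix.hasDerivAt_mul_apply_s19 h₁ h₂ i j

end EntrywiseDeriv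

theorem stmt_19_general (n k : ℕ) (ge go : ℝ → Matrix (Fin n) (Fin n) ℂ)
    (h1 : ∀ (t : ℝ) (i j : Fin n), HasDerivAt (fun s => ge s i j)
        ((ge t * Pik (Complex.I • (go t * ge t) ^ k)
          - Pik (Complex.I • (ge t * go t) ^ k) * ge t) i j) t)
    (h2 : ∀ (t : ℝ) (i j : Fin n), HasDerivAt (fun s => go s i j)
        ((go t * Pik (Complex.I • (ge t * go t) ^ k)
          - Pik (Complex.I • (go t * ge t) ^ k) * go t) i j) t) :
    ∀ (t : ℝ) (i j : Fin n), HasDerivAt (fun s => (ge s * go s) i j)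
        ((ge t * go t * Pik (Complex.I • (ge t * go t) ^ k)
          - Pik (Complex.I • (ge t * go t) ^ k) * (ge t * go t)) i j) t :=
  fun t => Matrix.hasDerivAt_mul_apply_of_twisted_lax (h1 t) (h2 t)

/-- If differentiable curves `g^e, g^o` of invertible matrices satisfy
`ġ^e = g^e Π_𝔨(i (g^o g^e)^k) − Π_𝔨(i (g^e g^o)^k) g^e` and
`ġ^o = g^o Π_𝔨(i (g^e g^o)^k) − Π_𝔨(i (g^o g^e)^k) g^o`, then the product
`g = g^e g^o` satisfies the Lax equation `ġ = g Π_𝔨(i g^k) − Π_𝔨(i g^k) g`. -/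
theorem stmt_19 (n k : ℕ) (hk : 0 < k) (ge go : ℝ → Matrix (Fin n) (Fin n) ℂ)
    (hinv1 : ∀ t : ℝ, IsUnit (ge t)) (hinv2 : ∀ t : ℝ, IsUnit (go t))
    (h1 : ∀ (t : ℝ) (i j : Fin n), HasDerivAt (fun s => ge s i j)
        ((ge t * Pik (Complex.I • (go t * ge t) ^ k)
          - Pik (Complex.I • (ge t * go t) ^ k) * ge t) i j) t)
    (h2 : ∀ (t : ℝ) (i j : Fin n), HasDerivAt (fun s => go s i j)
        ((go t * Pik (Complex.I • (ge t * go t) ^ k)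
          - Pik (Complex.I • (go t * ge t) ^ k) * go t) i j) t) :
    ∀ (t : ℝ) (i j : Fin n), HasDerivAt (fun s => (ge s * go s) i j)
        ((ge t * go t * Pik (Complex.I • (ge t * go t) ^ k)
          - Pik (Complex.I • (ge t * go t) ^ k) * (ge t * go t)) i j) t :=
  stmt_19_general n k ge go h1 h2
end
end
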